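/- Let B be a C*-algebra, σ a *-automorphism of B, and D a closed *-subalgebra of B such that: d·σᵏ(e) ∈ σᵏ(D) for all d, e ∈ D and all integers k ≥ 1; D ∩ σ(D) = {0}; and either (β) for all d, e ∈ D, if (d + σ(e))·σ(f) = 0 and σ(f)·(d + σ(e)) = 0 for every f ∈ D then d + σ(e) = 0, or the set of products {d·σ(e) : d, e ∈ D} equals σ(D). Then for all integers m ≤ n and all elements d_j ∈ σ^{j-1}(D) (m ≤ j ≤ n) with d_m + d_{m+1} + ⋯ + d_n = 0, one has d_j = 0 for every j with m ≤ j ≤ n. -/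

import Mathlib

/-- The integer power `σᵏ` (`k ∈ ℤ`) of a *-automorphism, as a function. -/
noncomputable def starAutZPow {B : Type*} [Add B] [Mul B] [SMul ℂ B] [Star B]
    (σ : B ≃⋆ₐ[ℂ] B) (k : ℤ) : B → B :=
  ⇑(σ.toRingEquiv.toEquiv ^ k)

/-!
Write `Tₖ = σ(D) + ⋯ + σᵏ(D)`. The heart of the matter is `D ∩ Tₖ = 0`, by induction on `k`
(for `k = 1` it is the hypothesis `D ∩ σ(D) = 0`). Let `x = σ(e) + σ(t) ∈ D` with `e ∈ D` and
`t ∈ Tₖ`. For `f ∈ D`, `t f ∈ Tₖ` and `σ(t f) = (x - σ(e)) σ(f) ∈ σ(D)`, so `t f = 0` by induction,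
and likewise `f t = 0`. Under (β) this forces `σ(t) = x - σ(e) = 0`; if instead `D·σ(D) = σ(D)`,
every element of `σⁱ(D)` (`i ≥ 1`) factors as `a u` with `a ∈ D`, so `t t* = 0` and `t = 0` by
the C*-identity. Either way `x = σ(e) ∈ D ∩ σ(D) = 0`.

Given `d_m + ⋯ + d_n = 0`, apply `σ^(1-m)`: the lowest term then lies in `D ∩ Tₙ₋ₘ`, so vanishes,
and one inducts on the number of terms.
-/

open Finset

theorem starAutZPow_eq_coe_zpow {B : Type*} [Add B] [Mul B] [SMul ℂ B] [Star B]
    (σ : B ≃⋆ₐ[ℂ] B) (k : ℤ) : starAutZPow σ k = ⇑(σ ^ k) :=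
  let toPerm : (B ≃⋆ₐ[ℂ] B) →* Equiv.Perm B :=
    { toFun := fun f => f.toRingEquiv.toEquiv, map_one' := rfl, map_mul' := fun _ _ => rfl }
  congrArg DFunLike.coe (map_zpow toPerm σ k).symm

namespace NonUnitalStarSubalgebra

section Ring

variable {R B : Type*} [CommRing R] [NonUnitalRing B] [StarRing B] [Module R B]

theorem mul_mem_of_forall_mul_mem {S T : NonUnitalStarSubalgebra R B}
    (h : ∀ s ∈ S, ∀ t ∈ T, s * t ∈ T) {s t : B} (hs : s ∈ S) (ht : t ∈ T) : t * s ∈ T := by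
  simpa using star_mem (h _ (star_mem hs) _ (star_mem ht))

variable (σ : B ≃⋆ₐ[R] B) (D : NonUnitalStarSubalgebra R B)

theorem apply_mem_map_pow_succ {n : ℕ} {x : B} (hx : x ∈ D.map (σ ^ n)) :
    σ x ∈ D.map (σ ^ (n + 1)) := by
  obtain ⟨y, hy, rfl⟩ := mem_map.1 hx
  exact mem_map.2 ⟨y, hy, by rw [pow_succ', StarAlgEquiv.mul_apply]⟩

theorem symm_apply_mem_map_pow {n : ℕ} {x : B} (hx : x ∈ D.map (σ ^ (n + 1))) :
    σ.symm x ∈ D.map (σ ^ n) := by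
  obtain ⟨y, hy, rfl⟩ := mem_map.1 hx
  exact mem_map.2 ⟨y, hy, by rw [pow_succ', StarAlgEquiv.mul_apply, StarAlgEquiv.symm_apply_apply]⟩

theorem zpow_apply_mem_map_zpow {j k : ℤ} {x : B} (hx : x ∈ D.map (σ ^ k)) :
    (σ ^ j) x ∈ D.map (σ ^ (j + k)) := by
  obtain ⟨y, hy, rfl⟩ := mem_map.1 hx
  exact mem_map.2 ⟨y, hy, by rw [zpow_add, StarAlgEquiv.mul_apply]⟩

/-- `Tₖ = σ(D) + σ²(D) + ⋯ + σᵏ(D)` -/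
def shiftSum (k : ℕ) : Set B :=
  {t | ∃ w : ℕ → B, (∀ i < k, w i ∈ D.map (σ ^ (i + 1))) ∧ ∑ i ∈ range k, w i = t}

variable {σ D}

theorem eq_zero_of_mem_shiftSum_zero {t : B} (ht : t ∈ shiftSum σ D 0) : t = 0 := by
  obtain ⟨w, -, rfl⟩ := ht
  exact sum_range_zero w

theorem star_mem_shiftSum {k : ℕ} {t : B} (ht : t ∈ shiftSum σ D k) :
    star t ∈ shiftSum σ D k := by
  obtain ⟨w, hw, rfl⟩ := ht
  exact ⟨fun i => star (w i), fun i hi => star_mem (hw i hi), (star_sum _ _).symm⟩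

theorem mul_mem_shiftSum
    (hmul : ∀ n : ℕ, ∀ d ∈ D, ∀ u ∈ D.map (σ ^ (n + 1)), d * u ∈ D.map (σ ^ (n + 1)))
    {k : ℕ} {t f : B} (ht : t ∈ shiftSum σ D k) (hf : f ∈ D) : t * f ∈ shiftSum σ D k := by
  obtain ⟨w, hw, rfl⟩ := ht
  exact ⟨fun i => w i * f, fun i hi => mul_mem_of_forall_mul_mem (hmul i) hf (hw i hi),
    (sum_mul _ _ _).symm⟩

theorem exists_eq_add_of_mem_shiftSum_succ {k : ℕ} {x : B} (hx : x ∈ shiftSum σ D (k + 1)) :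
    ∃ e ∈ D, ∃ t ∈ shiftSum σ D k, x = σ e + σ t := by
  obtain ⟨w, hw, rfl⟩ := hx
  obtain ⟨e, he, hwe⟩ := mem_map.1 (hw 0 k.succ_pos)
  refine ⟨e, he, ∑ i ∈ range k, σ.symm (w (i + 1)),
    ⟨fun i => σ.symm (w (i + 1)), fun i hi => symm_apply_mem_map_pow σ D (hw (i + 1) (by omega)),
      rfl⟩, ?_⟩
  rw [sum_range_succ', map_sum, add_comm, ← hwe]
  simp

theorem mul_eq_zero_of_eq_add_of_mem_shiftSum
    (hmul : ∀ n : ℕ, ∀ d ∈ D, ∀ u ∈ D.map (σ ^ (n + 1)), d * u ∈ D.map (σ ^ (n + 1)))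
    {k : ℕ} (hk : ∀ x ∈ D, x ∈ shiftSum σ D k → x = 0) {x e t f : B} (hx : x ∈ D) (he : e ∈ D)
    (ht : t ∈ shiftSum σ D k) (hxt : x = σ e + σ t) (hf : f ∈ D) : t * f = 0 := by
  refine hk _ ?_ (mul_mem_shiftSum hmul ht hf)
  obtain ⟨a, ha, hxa⟩ := mem_map.1 (hmul 0 x hx (σ f) (mem_map.2 ⟨f, hf, by simp⟩))
  have htf : t * f = a - e * f := EquivLike.injective σ <| by
    simp only [zero_add, pow_one] at hxa
    rw [map_mul, map_sub, map_mul, hxa, eq_sub_of_add_eq' hxt.symm, sub_mul]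
  rw [htf]
  exact sub_mem ha (mul_mem he hf)

theorem exists_eq_mul_of_mem_map_pow_succ
    (hmul : ∀ n : ℕ, ∀ d ∈ D, ∀ u ∈ D.map (σ ^ (n + 1)), d * u ∈ D.map (σ ^ (n + 1)))
    (hfac : ∀ u ∈ D.map σ, ∃ a ∈ D, ∃ b ∈ D, u = a * σ b) :
    ∀ n : ℕ, ∀ u ∈ D.map (σ ^ (n + 1)), ∃ a ∈ D, ∃ u' ∈ D.map (σ ^ (n + 1)), u = a * u'
  | 0, u, hu => by
    obtain ⟨a, ha, b, hb, rfl⟩ := hfac u (by simpa using hu)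
    exact ⟨a, ha, σ b, mem_map.2 ⟨b, hb, by simp⟩, rfl⟩
  | n + 1, u, hu => by
    obtain ⟨a, ha, u', hu', hau⟩ :=
      exists_eq_mul_of_mem_map_pow_succ hmul hfac n _ (symm_apply_mem_map_pow σ D hu)
    obtain ⟨a₀, ha₀, b₀, hb₀, hσa⟩ := hfac (σ a) (mem_map.2 ⟨a, ha, rfl⟩)
    refine ⟨a₀, ha₀, σ (b₀ * u'), apply_mem_map_pow_succ σ D (hmul n b₀ hb₀ u' hu'), ?_⟩
    rw [map_mul, ← mul_assoc, ← hσa, ← map_mul, ← hau, StarAlgEquiv.apply_symm_apply]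

theorem eq_zero_of_sum_range_eq_zero (hD : ∀ k : ℕ, ∀ x ∈ D, x ∈ shiftSum σ D k → x = 0) :
    ∀ k : ℕ, ∀ v : ℕ → B, (∀ i < k, v i ∈ D.map (σ ^ i)) → ∑ i ∈ range k, v i = 0 →
      ∀ i < k, v i = 0
  | 0, _, _, _, _, hi => absurd hi (Nat.not_lt_zero _)
  | k + 1, v, hv, hsum, i, hi => by
    rw [sum_range_succ'] at hsum
    have hv0 : v 0 = 0 := by
      obtain ⟨y, hy, hyv⟩ := mem_map.1 (hv 0 k.succ_pos)
      have h0 : v 0 ∈ D := by rw [← hyv, pow_zero]; exact hy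
      refine neg_eq_zero.1 (hD k _ (neg_mem h0) ⟨fun i => v (i + 1), fun i hi => ?_, ?_⟩)
      · exact hv (i + 1) (by omega)
      · exact eq_neg_of_add_eq_zero_left hsum
    rw [hv0, add_zero] at hsum
    have htail := eq_zero_of_sum_range_eq_zero hD k (fun i => σ.symm (v (i + 1)))
      (fun i hi => symm_apply_mem_map_pow σ D (hv (i + 1) (by omega)))
      (by rw [← map_sum, hsum, map_zero])
    match i with
    | 0 => exact hv0
    | i + 1 => exact (map_eq_zero_iff _ (EquivLike.injective σ.symm)).1 (htail i (by omega))

theorem eq_zero_of_sum_Icc_eq_zero (hD : ∀ k : ℕ, ∀ x ∈ D, x ∈ shiftSum σ D k → x = 0)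
    {m n : ℤ} {d : ℤ → B} (hd : ∀ j ∈ Icc m n, d j ∈ D.map (σ ^ (j - 1)))
    (hsum : ∑ j ∈ Icc m n, d j = 0) : ∀ j ∈ Icc m n, d j = 0 := by
  let v : ℕ → B := fun i => (σ ^ (1 - m)) (d (m + i))
  have hv : ∀ i < (n + 1 - m).toNat, v i ∈ D.map (σ ^ i) := by
    intro i hi
    have := zpow_apply_mem_map_zpow σ D (j := 1 - m) (hd (m + (i : ℤ)) (mem_Icc.2 (by omega)))
    rwa [show 1 - m + (m + i - 1) = (i : ℤ) by ring, zpow_natCast] at this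
  have hvsum : ∑ i ∈ range (n + 1 - m).toNat, v i = 0 := by
    rw [Int.Icc_eq_finset_map, sum_map] at hsum
    simp only [Function.Embedding.trans_apply, Nat.castEmbedding_apply, addLeftEmbedding_apply]
      at hsum
    simp only [v, ← map_sum, hsum, map_zero]
  intro j hj
  rw [mem_Icc] at hj
  have hvj := eq_zero_of_sum_range_eq_zero hD _ v hv hvsum (j - m).toNat (by omega)
  simp only [v, show m + ((j - m).toNat : ℤ) = j by omega] at hvj
  exact (map_eq_zero_iff _ (EquivLike.injective _)).1 hvj

end Ring

section CStarRing

variable {R B : Type*} [CommRing R] [NonUnitalNormedRing B] [StarRing B] [CStarRing B]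
  [Module R B] {σ : B ≃⋆ₐ[R] B} {D : NonUnitalStarSubalgebra R B}

theorem eq_zero_of_mem_shiftSum_of_mul_eq_zero
    (hfac : ∀ n : ℕ, ∀ u ∈ D.map (σ ^ (n + 1)), ∃ a ∈ D, ∃ u' ∈ D.map (σ ^ (n + 1)), u = a * u')
    {k : ℕ} {t : B} (ht : t ∈ shiftSum σ D k) (hann : ∀ f ∈ D, t * f = 0) : t = 0 := by
  obtain ⟨w, hw, hwt⟩ := star_mem_shiftSum ht
  rw [← CStarRing.mul_star_self_eq_zero_iff, ← hwt, mul_sum]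
  refine sum_eq_zero fun i hi => ?_
  obtain ⟨a, ha, u', -, hau⟩ := hfac i (w i) (hw i (mem_range.1 hi))
  rw [hau, ← mul_assoc, hann a ha, zero_mul]

theorem eq_zero_of_mem_shiftSum
    (hmul : ∀ n : ℕ, ∀ d ∈ D, ∀ u ∈ D.map (σ ^ (n + 1)), d * u ∈ D.map (σ ^ (n + 1)))
    (hdisj : ∀ x ∈ D, x ∈ D.map σ → x = 0)
    (hβ : (∀ d ∈ D, ∀ e ∈ D,
            (∀ f ∈ D, (d + σ e) * σ f = 0 ∧ σ f * (d + σ e) = 0) → d + σ e = 0) ∨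
          ∀ u ∈ D.map σ, ∃ a ∈ D, ∃ b ∈ D, u = a * σ b) :
    ∀ k : ℕ, ∀ x ∈ D, x ∈ shiftSum σ D k → x = 0
  | 0, _, _, hx => eq_zero_of_mem_shiftSum_zero hx
  | k + 1, x, hx, hxT => by
    have hk := eq_zero_of_mem_shiftSum hmul hdisj hβ k
    obtain ⟨e, he, t, ht, rfl⟩ := exists_eq_add_of_mem_shiftSum_succ hxT
    have hright : ∀ f ∈ D, t * f = 0 := fun f hf =>
      mul_eq_zero_of_eq_add_of_mem_shiftSum hmul hk hx he ht rfl hf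
    have hleft : ∀ f ∈ D, f * t = 0 := fun f hf => by
      simpa using congrArg star (mul_eq_zero_of_eq_add_of_mem_shiftSum hmul hk (star_mem hx)
        (star_mem he) (star_mem_shiftSum ht) (by simp [map_star]) (star_mem hf))
    have hσt : σ t = 0 := by
      rcases hβ with hann | hfac
      · simpa using hann _ hx (-e) (neg_mem he) fun f hf => by
          simp [← map_mul, hright f hf, hleft f hf]
      · rw [eq_zero_of_mem_shiftSum_of_mul_eq_zero (exists_eq_mul_of_mem_map_pow_succ hmul hfac)
          ht hright, map_zero]
    rw [hσt, add_zero] at hx ⊢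
    exact hdisj _ hx (mem_map.2 ⟨e, he, rfl⟩)

end CStarRing

end NonUnitalStarSubalgebra

theorem stmt15_general {B : Type*} [NonUnitalNormedRing B] [StarRing B] [CStarRing B]
    [NormedSpace ℂ B]
    (σ : B ≃⋆ₐ[ℂ] B) (D : NonUnitalStarSubalgebra ℂ B)
    (h1 : ∀ d ∈ D, ∀ e ∈ D, ∀ k : ℤ, 1 ≤ k →
        d * starAutZPow σ k e ∈ starAutZPow σ k '' (D : Set B))
    (hγ : (D : Set B) ∩ (⇑σ '' (D : Set B)) = {0})
    (hβ : (∀ d ∈ D, ∀ e ∈ D,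
            (∀ f ∈ D, (d + σ e) * σ f = 0 ∧ σ f * (d + σ e) = 0) → d + σ e = 0) ∨
          {x : B | ∃ d ∈ D, ∃ e ∈ D, x = d * σ e} = ⇑σ '' (D : Set B)) :
    ∀ m n : ℤ, m ≤ n → ∀ d : ℤ → B,
      (∀ j ∈ Finset.Icc m n, d j ∈ starAutZPow σ (j - 1) '' (D : Set B)) →
      (∑ j ∈ Finset.Icc m n, d j) = 0 →
      ∀ j ∈ Finset.Icc m n, d j = 0 := by
  intro m n _ d hd hsum
  simp only [starAutZPow_eq_coe_zpow] at h1 hd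
  have hmul : ∀ k : ℕ, ∀ x ∈ D, ∀ u ∈ D.map (σ ^ (k + 1)), x * u ∈ D.map (σ ^ (k + 1)) := by
    intro k x hx u hu
    obtain ⟨e, he, rfl⟩ := NonUnitalStarSubalgebra.mem_map.1 hu
    rw [← zpow_natCast, Nat.cast_succ]
    exact h1 x hx e he (k + 1) (by omega)
  have hdisj : ∀ x ∈ D, x ∈ D.map σ → x = 0 := fun x hx hxσ => hγ.subset ⟨hx, hxσ⟩
  have hfac : _ ∨ ∀ u ∈ D.map σ, ∃ a ∈ D, ∃ b ∈ D, u = a * σ b :=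
    hβ.imp_right fun hp u hu => hp.symm.subset hu
  exact NonUnitalStarSubalgebra.eq_zero_of_sum_Icc_eq_zero
    (NonUnitalStarSubalgebra.eq_zero_of_mem_shiftSum hmul hdisj hfac) hd hsum

/-- Under the hypotheses: `d·σᵏ(e) ∈ σᵏ(D)` for `k ≥ 1`, `D ∩ σ(D) = {0}`, and either (β)
(`σ(D)` has trivial two-sided annihilator in `D + σ(D)`) or `D·σ(D) = σ(D)`, the sum
decomposition `D_{m,n} = σ^{m-1}(D) ⊕ ⋯ ⊕ σ^{n-1}(D)` is direct: if elements
`d_j ∈ σ^{j-1}(D)` (`m ≤ j ≤ n`) sum to `0`, then each `d_j = 0`. -/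
theorem stmt15 {B : Type*} [NonUnitalNormedRing B] [StarRing B] [CStarRing B]
    [NormedSpace ℂ B] [IsScalarTower ℂ B B] [SMulCommClass ℂ B B] [StarModule ℂ B]
    [CompleteSpace B]
    (σ : B ≃⋆ₐ[ℂ] B) (D : NonUnitalStarSubalgebra ℂ B) (hD : IsClosed (D : Set B))
    (h1 : ∀ d ∈ D, ∀ e ∈ D, ∀ k : ℤ, 1 ≤ k →
        d * starAutZPow σ k e ∈ starAutZPow σ k '' (D : Set B))
    (hγ : (D : Set B) ∩ (⇑σ '' (D : Set B)) = {0})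
    (hβ : (∀ d ∈ D, ∀ e ∈ D,
            (∀ f ∈ D, (d + σ e) * σ f = 0 ∧ σ f * (d + σ e) = 0) → d + σ e = 0) ∨
          {x : B | ∃ d ∈ D, ∃ e ∈ D, x = d * σ e} = ⇑σ '' (D : Set B)) :
    ∀ m n : ℤ, m ≤ n → ∀ d : ℤ → B,
      (∀ j ∈ Finset.Icc m n, d j ∈ starAutZPow σ (j - 1) '' (D : Set B)) →
      (∑ j ∈ Finset.Icc m n, d j) = 0 →
      ∀ j ∈ Finset.Icc m n, d j = 0 :=
  stmt15_general σ D h1 hγ hβ
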